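/- arXiv:2111.03103 — 4 statements merged into one kernel-verified Lean document; each statement's English description precedes it below -/
import Mathlib

section
/- Let A be a Hermitian matrix and B a Hermitian matrix with ‖B‖ ≤ α_B and ‖[A,B]‖ ≤ α_{AB}. Then for any real s with |s| ≤ h, ‖[B, e^{iAs} B e^{-iAs}]‖ ≤ 2 α_B α_{AB} h. -/
/-!
Put `U(t) = exp (t • (I • A))`, a unitary since `A` is self-adjoint. The conjugate
`F(t) = U(t) B U(-t)` has derivative `U(t) [I • A, B] U(-t)`, of norm `‖[A, B]‖`, so the mean value
inequality gives `‖F(s) - B‖ ≤ |s| ‖[A, B]‖`. Finally `[B, F(s)] = [B, F(s) - B]`, whose norm is at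
most `2 ‖B‖ ‖F(s) - B‖`.
-/

open scoped Matrix.Norms.L2Operator
open NormedSpace Complex

theorem norm_mul_sub_mul_le_two_mul_norm_mul_norm_sub {R : Type*} [NormedRing R] (b c : R) :
    ‖b * c - c * b‖ ≤ 2 * ‖b‖ * ‖c - b‖ :=
  calc ‖b * c - c * b‖ = ‖b * (c - b) - (c - b) * b‖ := by noncomm_ring
    _ ≤ ‖b * (c - b)‖ + ‖(c - b) * b‖ := norm_sub_le _ _
    _ ≤ ‖b‖ * ‖c - b‖ + ‖c - b‖ * ‖b‖ := add_le_add (norm_mul_le _ _) (norm_mul_le _ _)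
    _ = 2 * ‖b‖ * ‖c - b‖ := by ring

theorem hasDerivAt_exp_smul_mul_mul_exp_neg_smul {𝕂 𝔸 : Type*} [RCLike 𝕂] [NormedRing 𝔸]
    [NormedAlgebra 𝕂 𝔸] [CompleteSpace 𝔸] (x b : 𝔸) (t : 𝕂) :
    HasDerivAt (fun u : 𝕂 => exp (u • x) * b * exp (-u • x))
      (exp (t • x) * (x * b - b * x) * exp (-t • x)) t := by
  have hleft := (hasDerivAt_exp_smul_const' x t).mul_const b
  have hright := hasDerivAt_exp_smul_const (-x) t
  simp only [smul_neg, ← neg_smul] at hright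
  refine (hleft.mul hright).congr_deriv ?_
  rw [← ((Commute.refl x).smul_left t).exp_left.eq, mul_neg,
    ((Commute.refl x).smul_left (-t)).exp_left.eq]
  noncomm_ring

section CStarRing

variable {E : Type*} [NormedRing E] [StarRing E] [CStarRing E] [NormedAlgebra ℂ E]
  [StarModule ℂ E] [CompleteSpace E] {a : E}

theorem IsSelfAdjoint.exp_smul_I_smul_mem_unitary (ha : IsSelfAdjoint a) (t : ℝ) :
    NormedSpace.exp (t • (I • a)) ∈ unitary E := by
  have hta : IsSelfAdjoint ((t : ℂ) • a) := IsSelfAdjoint.smul (conj_ofReal t) ha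
  rw [← Complex.coe_smul, smul_comm]
  exact (selfAdjoint.expUnitary ⟨_, hta⟩).prop

theorem IsSelfAdjoint.norm_exp_smul_conj_sub_le (ha : IsSelfAdjoint a) (b : E) (t : ℝ) :
    ‖NormedSpace.exp (t • (I • a)) * b * NormedSpace.exp (-t • (I • a)) - b‖ ≤
      ‖a * b - b * a‖ * |t| := by
  have hderiv_norm (u : ℝ) :
      ‖NormedSpace.exp (u • (I • a)) * ((I • a) * b - b * (I • a)) *
        NormedSpace.exp (-u • (I • a))‖ = ‖a * b - b * a‖ := by
    rw [CStarRing.norm_mul_mem_unitary _ (ha.exp_smul_I_smul_mem_unitary (-u)),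
      CStarRing.norm_mem_unitary_mul _ (ha.exp_smul_I_smul_mem_unitary u), smul_mul_assoc,
      mul_smul_comm, ← smul_sub, norm_smul, norm_I, one_mul]
  have hmvt := convex_univ.norm_image_sub_le_of_norm_hasDerivWithin_le
    (fun u _ => (hasDerivAt_exp_smul_mul_mul_exp_neg_smul (I • a) b u).hasDerivWithinAt)
    (fun u _ => (hderiv_norm u).le) (Set.mem_univ 0) (Set.mem_univ t)
  simpa using hmvt

end CStarRing

theorem stmt7_general (n : ℕ) (A B : Matrix (Fin n) (Fin n) ℂ)
    (hA : A.IsHermitian)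
    (αB αAB : ℝ) (hBn : ‖B‖ ≤ αB) (hABn : ‖A * B - B * A‖ ≤ αAB)
    (s h : ℝ) (hs : |s| ≤ h) :
    ‖B * (exp ((I * (s : ℂ)) • A) * B * exp ((-(I : ℂ) * (s : ℂ)) • A)) -
      (exp ((I * (s : ℂ)) • A) * B * exp ((-(I : ℂ) * (s : ℂ)) • A)) * B‖ ≤
      2 * αB * αAB * h := by
  have hplus : (I * (s : ℂ)) • A = s • (I • A) := by rw [mul_comm, mul_smul, Complex.coe_smul]
  have hminus : (-(I : ℂ) * (s : ℂ)) • A = -s • (I • A) := by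
    rw [← Complex.coe_smul, smul_smul]; push_cast; ring_nf
  have hconj : ‖exp (s • (I • A)) * B * exp (-s • (I • A)) - B‖ ≤ αAB * h :=
    (IsSelfAdjoint.norm_exp_smul_conj_sub_le hA.isSelfAdjoint B s).trans
      (mul_le_mul hABn hs (abs_nonneg s) ((norm_nonneg _).trans hABn))
  rw [hplus, hminus]
  calc _ ≤ 2 * ‖B‖ * ‖exp (s • (I • A)) * B * exp (-s • (I • A)) - B‖ :=
        norm_mul_sub_mul_le_two_mul_norm_mul_norm_sub _ _
    _ ≤ 2 * αB * (αAB * h) := by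
        have hαB : 0 ≤ αB := (norm_nonneg _).trans hBn
        gcongr
    _ = 2 * αB * αAB * h := by ring

/-- For Hermitian `A`, Hermitian `B` with `‖B‖ ≤ α_B` and `‖[A,B]‖ ≤ α_{AB}`, and `|s| ≤ h`,
`‖[B, e^{iAs} B e^{-iAs}]‖ ≤ 2 α_B α_{AB} h`. -/
theorem stmt7 (n : ℕ) (A B : Matrix (Fin n) (Fin n) ℂ)
    (hA : A.IsHermitian) (hB : B.IsHermitian)
    (αB αAB : ℝ) (hBn : ‖B‖ ≤ αB) (hABn : ‖A * B - B * A‖ ≤ αAB)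
    (s h : ℝ) (hs : |s| ≤ h) :
    ‖B * (exp ((I * (s : ℂ)) • A) * B * exp ((-(I : ℂ) * (s : ℂ)) • A)) -
      (exp ((I * (s : ℂ)) • A) * B * exp ((-(I : ℂ) * (s : ℂ)) • A)) * B‖ ≤
      2 * αB * αAB * h :=
  stmt7_general n A B hA αB αAB hBn hABn s h hs
end

section
/- Let A be Hermitian and B : ℝ → ℂ^{n×n} be continuously differentiable Hermitian-valued with ‖B(t)‖ ≤ α_B, ‖B'(t)‖ ≤ β_B, ‖[A,B(t)]‖ ≤ α_{AB} for all t. Then for all s,t with |s-t| ≤ h, ‖[B(t), e^{iA(s-t)} B(s) e^{-iA(s-t)}]‖ ≤ min( 2α_B², 2α_B(α_{AB}+β_B)h ). -/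
open scoped Matrix.Norms.L2Operator
open NormedSpace Complex

/-! With `U = exp (i (s - t) A)`, conjugation `x ↦ U x U*` is isometric, so both factors of the
commutator have norm at most `α_B`, giving the first bound. For the second, write
`[B t, U B s U*] = [B t, U B s U* - B t]`; the interaction-picture path
`u ↦ exp (i (u - t) A) B u exp (-i (u - t) A)` starts at `B t` and has derivative
`exp (i (u - t) A) ([iA, B u] + B' u) exp (-i (u - t) A)`, of norm at most `α_AB + β_B`, so the
mean value inequality bounds `‖U B s U* - B t‖` by `(α_AB + β_B) |s - t|`. -/

section Commutator

variable {R : Type*} [NonUnitalNormedRing R]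

theorem norm_mul_sub_mul_le (x y : R) : ‖x * y - y * x‖ ≤ 2 * ‖x‖ * ‖y‖ :=
  calc ‖x * y - y * x‖ ≤ ‖x‖ * ‖y‖ + ‖y‖ * ‖x‖ :=
        (norm_sub_le _ _).trans (add_le_add (norm_mul_le _ _) (norm_mul_le _ _))
    _ = 2 * ‖x‖ * ‖y‖ := by ring

theorem mul_sub_mul_eq_mul_sub_mul_sub (x y : R) :
    x * y - y * x = x * (y - x) - (y - x) * x := by
  noncomm_ring

theorem norm_mul_sub_mul_le_min {x y : R} {a δ : ℝ} (hx : ‖x‖ ≤ a) (hy : ‖y‖ ≤ a)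
    (hxy : ‖y - x‖ ≤ δ) : ‖x * y - y * x‖ ≤ min (2 * a ^ 2) (2 * a * δ) := by
  have ha : 0 ≤ a := (norm_nonneg x).trans hx
  refine le_min ((norm_mul_sub_mul_le x y).trans ?_) ?_
  · nlinarith [norm_nonneg x, norm_nonneg y]
  · rw [mul_sub_mul_eq_mul_sub_mul_sub]
    refine (norm_mul_sub_mul_le x (y - x)).trans ?_
    gcongr

end Commutator

section ComplexModule

variable {E : Type*} [AddCommGroup E] [Module ℂ E]

theorem I_mul_ofReal_smul (u : ℝ) (a : E) : (I * u) • a = u • (I • a) := by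
  rw [mul_comm, ← smul_smul, Complex.coe_smul]

theorem neg_I_mul_ofReal_smul (u : ℝ) (a : E) : (-I * u) • a = u • -(I • a) := by
  rw [neg_mul, neg_smul, I_mul_ofReal_smul, smul_neg]

end ComplexModule

section Conjugation

variable {E : Type*} [NormedRing E] [NormedAlgebra ℝ E] [CompleteSpace E]

theorem hasDerivAt_exp_smul_mul_mul_exp_smul_neg (b : E) {X : ℝ → E} {X' : E} {u : ℝ}
    (hX : HasDerivAt X X' u) (t : ℝ) :
    HasDerivAt (fun v => exp ((v - t) • b) * X v * exp ((v - t) • -b))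
      (exp ((u - t) • b) * (b * X u - X u * b + X') * exp ((u - t) • -b)) u := by
  have hexp (c : E) : HasDerivAt (fun v => exp ((v - t) • c)) (exp ((u - t) • c) * c) u :=
    (hasDerivAt_exp_smul_const c (u - t)).comp_sub_const u t
  refine (((hexp b).mul hX).mul (hexp (-b))).congr_deriv ?_
  have hcomm : exp ((u - t) • -b) * b = b * exp ((u - t) • -b) :=
    ((Commute.refl b).neg_right.smul_right (u - t)).exp_right.symm.eq
  simp only [Pi.mul_apply, mul_neg, hcomm]
  noncomm_ring

end Conjugation

section CStarAlgebra

variable {E : Type*} [CStarAlgebra E]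

theorem norm_exp_smul_mul_mul_exp_smul_neg {b : E} (hb : b ∈ skewAdjoint E) (x : E) (u : ℝ) :
    ‖exp (u • b) * x * exp (u • -b)‖ = ‖x‖ := by
  -- `exp_mem_unitary_of_mem_skewAdjoint` is stated for normed `ℚ`-algebras.
  let +nondep : NormedAlgebra ℚ E := .restrictScalars ℚ ℂ E
  have hunitary {c : E} (hc : c ∈ skewAdjoint E) : exp (u • c) ∈ unitary E :=
    exp_mem_unitary_of_mem_skewAdjoint (skewAdjoint.smul_mem u hc)
  rw [CStarRing.norm_mul_mem_unitary _ (hunitary (neg_mem hb)),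
    CStarRing.norm_mem_unitary_mul x (hunitary hb)]

theorem norm_exp_smul_mul_mul_exp_smul_neg_sub_le {b : E} (hb : b ∈ skewAdjoint E)
    {X X' : ℝ → E} (hX : ∀ u, HasDerivAt X (X' u) u) {c d : ℝ}
    (hc : ∀ u, ‖b * X u - X u * b‖ ≤ c) (hd : ∀ u, ‖X' u‖ ≤ d) (s t : ℝ) :
    ‖exp ((s - t) • b) * X s * exp ((s - t) • -b) - X t‖ ≤ (c + d) * |s - t| := by
  have hbound (u : ℝ) :
      ‖exp ((u - t) • b) * (b * X u - X u * b + X' u) * exp ((u - t) • -b)‖ ≤ c + d := by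
    rw [norm_exp_smul_mul_mul_exp_smul_neg hb]
    exact (norm_add_le _ _).trans (add_le_add (hc u) (hd u))
  have := convex_univ.norm_image_sub_le_of_norm_hasDerivWithin_le
    (fun u _ => (hasDerivAt_exp_smul_mul_mul_exp_smul_neg b (hX u) t).hasDerivWithinAt)
    (fun u _ => hbound u) (Set.mem_univ t) (Set.mem_univ s)
  simpa [sub_self, Real.norm_eq_abs] using this

end CStarAlgebra

theorem stmt8_general (n : ℕ) (A : Matrix (Fin n) (Fin n) ℂ) (hA : A.IsHermitian)
    (B B' : ℝ → Matrix (Fin n) (Fin n) ℂ)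
    (hB' : ∀ t, HasDerivAt B (B' t) t)
    (αB βB αAB : ℝ)
    (hBn : ∀ t, ‖B t‖ ≤ αB) (hB'n : ∀ t, ‖B' t‖ ≤ βB)
    (hABn : ∀ t, ‖A * B t - B t * A‖ ≤ αAB)
    (s t h : ℝ) (hst : |s - t| ≤ h) :
    ‖B t * (exp ((I * ((s - t : ℝ) : ℂ)) • A) * B s * exp ((-(I : ℂ) * ((s - t : ℝ) : ℂ)) • A)) -
      (exp ((I * ((s - t : ℝ) : ℂ)) • A) * B s * exp ((-(I : ℂ) * ((s - t : ℝ) : ℂ)) • A)) * B t‖ ≤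
      min (2 * αB ^ 2) (2 * αB * (αAB + βB) * h) := by
  have hIA : I • A ∈ skewAdjoint (Matrix (Fin n) (Fin n) ℂ) :=
    hA.isSelfAdjoint.smul_mem_skewAdjoint conj_I
  have hcomm (u : ℝ) : ‖I • A * B u - B u * (I • A)‖ ≤ αAB := by
    rw [smul_mul_assoc, mul_smul_comm, ← smul_sub, norm_smul, norm_I, one_mul]
    exact hABn u
  have hrate : 0 ≤ αAB + βB :=
    add_nonneg ((norm_nonneg _).trans (hABn 0)) ((norm_nonneg _).trans (hB'n 0))
  rw [I_mul_ofReal_smul, neg_I_mul_ofReal_smul, mul_assoc (2 * αB)]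
  refine norm_mul_sub_mul_le_min (hBn t)
    ((norm_exp_smul_mul_mul_exp_smul_neg hIA _ _).trans_le (hBn s)) ?_
  calc _ ≤ (αAB + βB) * |s - t| :=
        norm_exp_smul_mul_mul_exp_smul_neg_sub_le hIA hB' hcomm hB'n s t
    _ ≤ (αAB + βB) * h := mul_le_mul_of_nonneg_left hst hrate

/-- Bounds for commutators in the interaction picture: for `|s-t| ≤ h`,
`‖[B(t), e^{iA(s-t)} B(s) e^{-iA(s-t)}]‖ ≤ min(2α_B², 2α_B(α_{AB}+β_B)h)`. -/
theorem stmt8 (n : ℕ) (A : Matrix (Fin n) (Fin n) ℂ) (hA : A.IsHermitian)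
    (B B' : ℝ → Matrix (Fin n) (Fin n) ℂ)
    (hB' : ∀ t, HasDerivAt B (B' t) t) (hB'cont : Continuous B')
    (hBherm : ∀ t, (B t).IsHermitian)
    (αB βB αAB : ℝ)
    (hBn : ∀ t, ‖B t‖ ≤ αB) (hB'n : ∀ t, ‖B' t‖ ≤ βB)
    (hABn : ∀ t, ‖A * B t - B t * A‖ ≤ αAB)
    (s t h : ℝ) (hst : |s - t| ≤ h) :
    ‖B t * (exp ((I * ((s - t : ℝ) : ℂ)) • A) * B s * exp ((-(I : ℂ) * ((s - t : ℝ) : ℂ)) • A)) -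
      (exp ((I * ((s - t : ℝ) : ℂ)) • A) * B s * exp ((-(I : ℂ) * ((s - t : ℝ) : ℂ)) • A)) * B t‖ ≤
      min (2 * αB ^ 2) (2 * αB * (αAB + βB) * h) :=
  stmt8_general n A hA B B' hB' αB βB αAB hBn hB'n hABn s t h hst
end

section
/- Let H : [0,T] → ℂ^{n×n} be a continuous family of Hermitian matrices, and define Ũ₁(t) = exp(-i ∫_0^t H(s)ds). Then Ũ₁ is differentiable and satisfies i ∂_t Ũ₁(t) = ( ∫_0^1 e^{-iβ∫_0^t H(s)ds} H(t) e^{iβ∫_0^t H(s)ds} dβ ) Ũ₁(t). -/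
open scoped Matrix.Norms.L2Operator
open NormedSpace Complex intervalIntegral

/-!
By Duhamel's formula `e^A - e^B = ∫₀¹ e^{sA} (A - B) e^{(1-s)B} ds`, the difference quotient of
`τ ↦ e^{Ω(τ)}` at `t` is a jointly continuous function of `Ω(τ)` and of the difference quotient
of `Ω`, so it converges to `∫₀¹ e^{sΩ(t)} Ω'(t) e^{(1-s)Ω(t)} ds`; splitting
`e^{(1-s)Ω} = e^{-sΩ} e^{Ω}` puts this in the conjugated form. For `Ω = -i∫₀^t H`, the
fundamental theorem of calculus gives `Ω' = -iH(t)`.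
-/

section ExpDerivative

variable {𝔸 : Type*} [NormedRing 𝔸] [NormedAlgebra ℝ 𝔸] [CompleteSpace 𝔸]

theorem continuous_exp_of_normedAlgebra_real : Continuous (exp : 𝔸 → 𝔸) :=
  letI := NormedAlgebra.restrictScalars ℚ ℝ 𝔸
  exp_continuous

theorem exp_one_sub_smul (A : 𝔸) (s : ℝ) : exp ((1 - s) • A) = exp (-s • A) * exp A := by
  let := NormedAlgebra.restrictScalars ℚ ℝ 𝔸
  rw [← exp_add_of_commute ((Commute.refl A).smul_left (-s)), sub_eq_neg_add, add_smul, one_smul]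

theorem hasDerivAt_exp_smul_mul_exp_one_sub_smul (A B : 𝔸) (s : ℝ) :
    HasDerivAt (fun u : ℝ => exp (u • A) * exp ((1 - u) • B))
      (exp (s • A) * (A - B) * exp ((1 - s) • B)) s := by
  have hB := (hasDerivAt_exp_smul_const' (𝕂 := ℝ) B (1 - s)).comp_const_sub 1 s
  refine ((hasDerivAt_exp_smul_const (𝕂 := ℝ) A s).mul hB).congr_deriv ?_
  noncomm_ring

theorem exp_sub_exp_eq_integral (A B : 𝔸) :
    exp A - exp B = ∫ s in (0 : ℝ)..1, exp (s • A) * (A - B) * exp ((1 - s) • B) := by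
  have hexp := continuous_exp_of_normedAlgebra_real (𝔸 := 𝔸)
  rw [integral_eq_sub_of_hasDerivAt (fun s _ => hasDerivAt_exp_smul_mul_exp_one_sub_smul A B s)
    ((by fun_prop : Continuous _).intervalIntegrable _ _)]
  simp

theorem slope_exp_comp_eq_integral (Ω : ℝ → 𝔸) (t τ : ℝ) :
    slope (fun τ => exp (Ω τ)) t τ
      = ∫ β in (0 : ℝ)..1, exp (β • Ω τ) * slope Ω t τ * exp ((1 - β) • Ω t) := by
  simp only [slope_def_module, exp_sub_exp_eq_integral (Ω τ) (Ω t), ← integral_smul,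
    mul_smul_comm, smul_mul_assoc]

theorem integral_exp_smul_mul_exp_one_sub_smul (A N : 𝔸) :
    ∫ β in (0 : ℝ)..1, exp (β • A) * N * exp ((1 - β) • A)
      = (∫ β in (0 : ℝ)..1, exp (β • A) * N * exp (-β • A)) * exp A := by
  have hexp := continuous_exp_of_normedAlgebra_real (𝔸 := 𝔸)
  have hint : IntervalIntegrable (fun β : ℝ => exp (β • A) * N * exp (-β • A))
      MeasureTheory.volume 0 1 :=
    (by fun_prop : Continuous _).intervalIntegrable _ _
  simp only [exp_one_sub_smul, ← mul_assoc]
  exact ((ContinuousLinearMap.mul ℝ 𝔸).flip (exp A)).intervalIntegral_comp_comm hint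

theorem HasDerivWithinAt.normedSpace_exp {Ω : ℝ → 𝔸} {Ω' : 𝔸} {s : Set ℝ} {t : ℝ}
    (hΩ : HasDerivWithinAt Ω Ω' s t) :
    HasDerivWithinAt (fun τ => NormedSpace.exp (Ω τ))
      ((∫ β in (0 : ℝ)..1, NormedSpace.exp (β • Ω t) * Ω' * NormedSpace.exp (-β • Ω t)) *
        NormedSpace.exp (Ω t)) s t := by
  have hexp := continuous_exp_of_normedAlgebra_real (𝔸 := 𝔸)
  let D : 𝔸 × 𝔸 → 𝔸 := fun p =>
    ∫ β in (0 : ℝ)..1, NormedSpace.exp (β • p.1) * p.2 * NormedSpace.exp ((1 - β) • Ω t)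
  have hD : Continuous D := continuous_parametric_intervalIntegral_of_continuous' (by fun_prop) 0 1
  have hΩt : Filter.Tendsto Ω (nhdsWithin t (s \ {t})) (nhds (Ω t)) :=
    hΩ.continuousWithinAt.mono_left (nhdsWithin_mono _ Set.sdiff_subset)
  rw [hasDerivWithinAt_iff_tendsto_slope, ← integral_exp_smul_mul_exp_one_sub_smul]
  simp only [funext (slope_exp_comp_eq_integral Ω t)]
  exact (hD.tendsto _).comp (hΩt.prodMk_nhds (hasDerivWithinAt_iff_tendsto_slope.mp hΩ))

end ExpDerivative

theorem stmt12_general (n : ℕ) (T : ℝ) (H : ℝ → Matrix (Fin n) (Fin n) ℂ)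
    (hHcont : ContinuousOn H (Set.Icc 0 T))
    (t : ℝ) (ht : t ∈ Set.Icc (0 : ℝ) T) :
    HasDerivWithinAt (fun τ => exp ((-(I : ℂ)) • ∫ s in (0 : ℝ)..τ, H s))
      ((-(I : ℂ)) •
        ((∫ β in (0 : ℝ)..1,
            exp ((-(I : ℂ) * (β : ℂ)) • ∫ s in (0 : ℝ)..t, H s) * H t *
              exp ((I * (β : ℂ)) • ∫ s in (0 : ℝ)..t, H s)) *
          exp ((-(I : ℂ)) • ∫ s in (0 : ℝ)..t, H s)))
      (Set.Icc 0 T) t := by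
  have hsub : Set.uIcc 0 t ⊆ Set.Icc 0 T := by
    rw [Set.uIcc_of_le ht.1]
    exact Set.Icc_subset_Icc_right ht.2
  have : Fact (t ∈ Set.Icc 0 T) := ⟨ht⟩
  have hK : HasDerivWithinAt (fun τ => ∫ s in (0 : ℝ)..τ, H s) (H t) (Set.Icc 0 T) t :=
    integral_hasDerivWithinAt_right ((hHcont.mono hsub).intervalIntegrable)
      ⟨_, self_mem_nhdsWithin, hHcont.aestronglyMeasurable measurableSet_Icc⟩
      (hHcont.continuousWithinAt ht)
  refine (hK.const_smul (-I)).normedSpace_exp.congr_deriv ?_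
  have hscalar : ∀ (β : ℝ) (c : ℂ) (K : Matrix (Fin n) (Fin n) ℂ), β • c • K = (c * β) • K :=
    fun β c K => by rw [← coe_smul, smul_smul, mul_comm]
  simp only [Pi.smul_apply, hscalar, mul_smul_comm, smul_mul_assoc, integral_smul,
    ofReal_neg, mul_neg, neg_mul, neg_neg]

/-- `Ũ₁(t) = exp(-i∫_0^t H)` is differentiable on `[0,T]` with
`i ∂_t Ũ₁(t) = (∫_0^1 e^{-iβK(t)} H(t) e^{iβK(t)} dβ) Ũ₁(t)`, where `K(t) = ∫_0^t H`. -/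
theorem stmt12 (n : ℕ) (T : ℝ) (H : ℝ → Matrix (Fin n) (Fin n) ℂ)
    (hHcont : ContinuousOn H (Set.Icc 0 T))
    (hHherm : ∀ t ∈ Set.Icc (0 : ℝ) T, (H t).IsHermitian)
    (t : ℝ) (ht : t ∈ Set.Icc (0 : ℝ) T) :
    HasDerivWithinAt (fun τ => exp ((-(I : ℂ)) • ∫ s in (0 : ℝ)..τ, H s))
      ((-(I : ℂ)) •
        ((∫ β in (0 : ℝ)..1,
            exp ((-(I : ℂ) * (β : ℂ)) • ∫ s in (0 : ℝ)..t, H s) * H t *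
              exp ((I * (β : ℂ)) • ∫ s in (0 : ℝ)..t, H s)) *
          exp ((-(I : ℂ)) • ∫ s in (0 : ℝ)..t, H s)))
      (Set.Icc 0 T) t :=
  stmt12_general n T H hHcont t ht
end

section
/- Let A, B be Hermitian matrices and h > 0. Then for any positive integer L with Lh = T, the product e^{-iAh/2} e^{-iBh} e^{-iAh} e^{-iBh} ⋯ e^{-iAh} e^{-iBh} e^{-iAh/2} (with L factors of e^{-iBh}) equals e^{-iALh} · e^{-iH_I(Lh − h/2)h} ⋯ e^{-iH_I(h/2)h}, where H_I(t) = e^{iAt} B e^{-iAt}. In other words, applying the midpoint quadrature rule to qHOP in the interaction picture recovers the second-order Trotter formula. -/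
open NormedSpace Complex

/-!
With `U t = e^{-iAt}`, conjugation commutes with the exponential, so
`e^{-i H_I(t) h} = U(-t) e^{-iBh} U(t)`. In the time-ordered product over the midpoints
`t_j = jh + h/2`, neighbouring conjugations merge to `U(t_j - t_{j-1}) = U(h)`, and the outer ones
combine with `U(T)` to `U(h/2)` on either side, which is the symmetric Trotter product.
-/

theorem mul_prod_midpoint_conj_eq_strang {M : Type*} [Monoid M] (U : ℝ → M)
    (hU : ∀ s t, U (s + t) = U s * U t) (X : M) (h : ℝ) (K : ℕ) :
    U ((K + 1 : ℕ) * h) *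
        (List.ofFn fun j : Fin (K + 1) => U (-(j * h + h / 2)) * X * U (j * h + h / 2)).reverse.prod =
      U (h / 2) * (X * U h) ^ K * X * U (h / 2) := by
  have hhalf : U (h / 2) * U (h / 2) = U h := by rw [← hU, add_halves]
  induction K with
  | zero =>
    have hfirst : U h * U (-(h / 2)) = U (h / 2) := by rw [← hU]; ring_nf
    simp [← mul_assoc, hfirst]
  | succ K ih =>
    rw [List.ofFn_succ', List.concat_eq_append, List.reverse_append, List.prod_append]
    simp only [Fin.val_last, Fin.val_castSucc, List.reverse_cons, List.reverse_nil,
      List.nil_append, List.prod_cons, List.prod_nil, mul_one]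
    set t : ℝ := (K + 1 : ℕ) * h
    set P := (List.ofFn fun j : Fin (K + 1) =>
      U (-(j * h + h / 2)) * X * U (j * h + h / 2)).reverse.prod
    have hfirst : U ((K + 1 + 1 : ℕ) * h) * U (-(t + h / 2)) = U (h / 2) := by
      rw [← hU]; push_cast [t]; ring_nf
    have hlast : U (t + h / 2) = U (h / 2) * U t := by rw [← hU, add_comm]
    calc _ = U ((K + 1 + 1 : ℕ) * h) * U (-(t + h / 2)) * X * U (h / 2) * (U t * P) := by
          rw [hlast]; simp only [mul_assoc]
      _ = U (h / 2) * (X * (U (h / 2) * U (h / 2))) * (X * U h) ^ K * X * U (h / 2) := by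
          rw [hfirst, ih]; simp only [mul_assoc]
      _ = _ := by rw [hhalf, pow_succ']; simp only [mul_assoc]

section MatrixExp

variable {m 𝕂 : Type*} [Fintype m] [DecidableEq m] [RCLike 𝕂]

theorem Matrix.exp_add_smul (a b : 𝕂) (A : Matrix m m 𝕂) :
    exp ((a + b) • A) = exp (a • A) * exp (b • A) := by
  rw [add_smul, Matrix.exp_add_of_commute]
  exact ((Commute.refl A).smul_left a).smul_right b

theorem Matrix.exp_smul_conj_exp_smul (A B : Matrix m m 𝕂) (t c : 𝕂) :
    exp (c • (exp (t • A) * B * exp (-t • A))) = exp (t • A) * exp (c • B) * exp (-t • A) := by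
  have := Matrix.exp_conj (exp (t • A)) (c • B) (Matrix.isUnit_exp _)
  rw [neg_smul, Matrix.exp_neg, ← this, mul_smul_comm, smul_mul_assoc]

end MatrixExp

theorem stmt17_general (n : ℕ) (A B : Matrix (Fin n) (Fin n) ℂ)
    (h T : ℝ) (L : ℕ) (hL : 1 ≤ L) (hT : T = L * h)
    (HI : ℝ → Matrix (Fin n) (Fin n) ℂ)
    (hHI : ∀ t, HI t = NormedSpace.exp ((I * (t : ℂ)) • A) * B * NormedSpace.exp ((-(I : ℂ) * (t : ℂ)) • A)) :
    NormedSpace.exp ((-(I : ℂ) * ((h / 2 : ℝ) : ℂ)) • A) *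
        (NormedSpace.exp ((-(I : ℂ) * (h : ℂ)) • B) * NormedSpace.exp ((-(I : ℂ) * (h : ℂ)) • A)) ^ (L - 1) *
        NormedSpace.exp ((-(I : ℂ) * (h : ℂ)) • B) *
        NormedSpace.exp ((-(I : ℂ) * ((h / 2 : ℝ) : ℂ)) • A) =
      NormedSpace.exp ((-(I : ℂ) * (T : ℂ)) • A) *
        ((List.ofFn fun j : Fin L =>
            NormedSpace.exp ((-(I : ℂ) * (h : ℂ)) • HI ((j : ℝ) * h + h / 2))).reverse).prod := by
  obtain ⟨K, rfl⟩ := Nat.exists_eq_add_of_le' hL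
  set U : ℝ → Matrix (Fin n) (Fin n) ℂ := fun t => exp ((-I * (t : ℂ)) • A)
  have hU : ∀ s t, U (s + t) = U s * U t := fun s t => by
    simp only [U, ofReal_add, mul_add, Matrix.exp_add_smul]
  have hconj : ∀ t, exp ((-I * (h : ℂ)) • HI t) = U (-t) * exp ((-I * (h : ℂ)) • B) * U t := fun t => by
    simpa [U, hHI] using Matrix.exp_smul_conj_exp_smul A B (I * t) (-I * h)
  simp only [hconj]
  rw [hT, mul_prod_midpoint_conj_eq_strang U hU, Nat.add_sub_cancel]

/-- Midpoint-quadrature qHOP in the interaction picture recovers the second-order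
Trotter formula: with `H_I(t) = e^{iAt} B e^{-iAt}` and `T = L h`,
`e^{-iAh/2} (e^{-iBh} e^{-iAh})^{L-1} e^{-iBh} e^{-iAh/2}
  = e^{-iAT} · e^{-iH_I(Lh-h/2)h} ⋯ e^{-iH_I(h/2)h}`. -/
theorem stmt17 (n : ℕ) (A B : Matrix (Fin n) (Fin n) ℂ)
    (hA : A.IsHermitian) (hB : B.IsHermitian)
    (h T : ℝ) (hh : 0 < h) (L : ℕ) (hL : 1 ≤ L) (hT : T = L * h)
    (HI : ℝ → Matrix (Fin n) (Fin n) ℂ)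
    (hHI : ∀ t, HI t = NormedSpace.exp ((I * (t : ℂ)) • A) * B * NormedSpace.exp ((-(I : ℂ) * (t : ℂ)) • A)) :
    NormedSpace.exp ((-(I : ℂ) * ((h / 2 : ℝ) : ℂ)) • A) *
        (NormedSpace.exp ((-(I : ℂ) * (h : ℂ)) • B) * NormedSpace.exp ((-(I : ℂ) * (h : ℂ)) • A)) ^ (L - 1) *
        NormedSpace.exp ((-(I : ℂ) * (h : ℂ)) • B) *
        NormedSpace.exp ((-(I : ℂ) * ((h / 2 : ℝ) : ℂ)) • A) =
      NormedSpace.exp ((-(I : ℂ) * (T : ℂ)) • A) *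
        ((List.ofFn fun j : Fin L =>
            NormedSpace.exp ((-(I : ℂ) * (h : ℂ)) • HI ((j : ℝ) * h + h / 2))).reverse).prod :=
  stmt17_general n A B h T L hL hT HI hHI
end
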